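/- arXiv:1204.6506 — 6 statements merged into one kernel-verified Lean document; each statement's English description precedes it below -/
import Mathlib

section
/- Let G be a group, H a subgroup of G, and let T be the HNN extension of G with stable letter t centralizing H, i.e. T = ⟨G, t | t⁻¹ h t = h for all h ∈ H⟩ (the HNN extension of G with both associated subgroups equal to H and the identity isomorphism between them). If T is residually finite, then H is closed in the profinite topology of G: for every u ∈ G with u ∉ H there exists a normal subgroup N of finite index in G such that u ∉ NH. -/
open scoped Pointwise

/-!
If `u ∉ H`, Britton's lemma shows that `u` does not commute with the stable letter `t`, so
residual finiteness yields a finite quotient `φ` of the HNN extension in which `φ u` and `φ t`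
do not commute. The preimage in `G` of the centralizer of `φ t` is a subgroup containing `H`
(as `t` centralizes `H`) and the finite-index normal subgroup `N = ker (φ ∘ of)`, hence `N * H`,
but it does not contain `u`.
-/

namespace HNNExtension

variable {G : Type*} [Group G] {A B : Subgroup G} {φ : A ≃* B}

theorem mem_of_inv_t_mul_of_mul_t_mem_range {g : G}
    (hg : t⁻¹ * of g * t ∈ (of.range : Subgroup (HNNExtension G A B φ))) : g ∈ B := by
  by_contra hgB
  -- `g ∉ B` makes `t⁻¹ g t` a reduced word, which Britton's lemma keeps out of `G`.
  let w : NormalWord.ReducedWord G A B :=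
    { head := 1
      toList := [(-1, g), (1, 1)]
      chain := List.isChain_pair.2 fun hg' => (hgB (by simpa using hg')).elim }
  have hw : w.prod φ = t⁻¹ * of g * t := by
    simp [w, NormalWord.ReducedWord.prod, mul_assoc, zpow_neg]
  simpa [w] using ReducedWord.toList_eq_nil_of_mem_of_range φ w (hw ▸ hg)

theorem commute_of_t {H : Subgroup G} (h : H) :
    Commute (of (h : G) : HNNExtension G H H (MulEquiv.refl H)) t :=
  (of_mul_t (φ := MulEquiv.refl H) h).trans (by simp)

theorem mem_of_commute_of_t {H : Subgroup G} {g : G}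
    (hg : Commute (of g : HNNExtension G H H (MulEquiv.refl H)) t) : g ∈ H :=
  mem_of_inv_t_mul_of_mul_t_mem_range ⟨g, by rw [mul_assoc, hg.eq, inv_mul_cancel_left]⟩

end HNNExtension

open HNNExtension
open scoped commutatorElement

/-- If the HNN extension `T = ⟨G, t | t⁻¹ht = h (h ∈ H)⟩` of a group `G` with stable letter
centralizing a subgroup `H` is residually finite, then `H` is closed in the profinite
topology of `G`: every `u ∈ G \ H` lies outside `NH` for some normal subgroup `N` of finite
index in `G`. -/
theorem profinitely_closed_of_residuallyFinite_hnn_centralizing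
    (G : Type*) [Group G] (H : Subgroup G)
    (hT : ∀ g : HNNExtension G H H (MulEquiv.refl H), g ≠ 1 →
      ∃ (K : Type) (_ : Group K) (_ : Finite K)
        (φ : HNNExtension G H H (MulEquiv.refl H) →* K), φ g ≠ 1) :
    ∀ u : G, u ∉ H →
      ∃ N : Subgroup G, N.Normal ∧ N.FiniteIndex ∧ u ∉ ((N : Set G) * (H : Set G)) := by
  intro u hu
  have hcomm : ⁅of u, t⁆ ≠ (1 : HNNExtension G H H (MulEquiv.refl H)) :=
    fun h => hu (mem_of_commute_of_t (commutatorElement_eq_one_iff_commute.1 h))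
  obtain ⟨K, _, _, φ, hφ⟩ := hT _ hcomm
  let ψ := φ.comp of
  let C := (Subgroup.centralizer {φ t}).comap ψ
  have hkerC : ψ.ker ≤ C := fun n hn => by
    simp [C, ψ, MonoidHom.mem_ker.1 hn]
  have hHC : H ≤ C := fun h hh => by
    simpa [C, Subgroup.mem_centralizer_singleton_iff, ψ] using
      ((commute_of_t ⟨h, hh⟩).map φ).eq
  refine ⟨ψ.ker, ψ.normal_ker, inferInstance, fun huNH => hφ ?_⟩
  rw [← Subgroup.normal_mul, SetLike.mem_coe] at huNH
  have huC : u ∈ C := sup_le hkerC hHC huNH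
  rw [map_commutatorElement, commutatorElement_eq_one_iff_mul_comm]
  simpa [C, ψ, Subgroup.mem_centralizer_singleton_iff, eq_comm] using huC
end

section
/- Let G be a group generated by a finite set X with X = X⁻¹, let R be a finite subset of G with R = R⁻¹, let N be the normal closure of R in G, and let E(G,N) = {(u, v) ∈ G × G : u⁻¹v ∈ N}. Then E(G,N) is a subgroup of G × G and is generated by the finite set D = {(r, 1) : r ∈ R} ∪ {(x, x) : x ∈ X}. -/
/-!
Every `(u, v)` with `u⁻¹ * v ∈ N` factors as `(u, u) * (1, u⁻¹ * v)`. The diagonal lies in the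
subgroup `H` generated by `D` because `X` generates `G`, and `{n | (1, n) ∈ H}` is then a normal
subgroup (conjugate by diagonal elements) containing `R` (as `(1, r) = (r, 1)⁻¹ * (r, r)`), hence
containing `N`. Conversely `D` lies in the equalizer, which is a subgroup: the equalizer of the
two projections `G × G → G ⧸ N`.
-/

namespace Subgroup

variable {G : Type*} [Group G]

def equalizer (N : Subgroup G) [N.Normal] : Subgroup (G × G) :=
  ((QuotientGroup.mk' N).comp (MonoidHom.fst G G)).eqLocus
    ((QuotientGroup.mk' N).comp (MonoidHom.snd G G))

theorem mem_equalizer {N : Subgroup G} [N.Normal] {p : G × G} :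
    p ∈ N.equalizer ↔ p.1⁻¹ * p.2 ∈ N :=
  QuotientGroup.eq

theorem prod_self_mem_of_closure_eq_top {X : Set G} (hX : closure X = ⊤)
    {H : Subgroup (G × G)} (hXH : ∀ x ∈ X, (x, x) ∈ H) (g : G) : (g, g) ∈ H :=
  have hle : closure X ≤ H.comap ((MonoidHom.id G).prod (MonoidHom.id G)) := (closure_le _).2 hXH
  hle (hX ▸ mem_top g)

theorem one_prod_mem_of_mem_normalClosure {R : Set G} {H : Subgroup (G × G)}
    (hdiag : ∀ g : G, (g, g) ∈ H) (hR : ∀ r ∈ R, (r, 1) ∈ H) {n : G}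
    (hn : n ∈ normalClosure R) : ((1 : G), n) ∈ H := by
  let K := H.comap (MonoidHom.inr G G)
  have hK : K.Normal := ⟨fun m hm g => by
    have hconj : ((1 : G), g * m * g⁻¹) = (g, g) * (1, m) * (g, g)⁻¹ := by ext <;> simp
    change ((1 : G), g * m * g⁻¹) ∈ H
    rw [hconj]
    exact mul_mem (mul_mem (hdiag g) hm) (inv_mem (hdiag g))⟩
  have hRK : R ⊆ K := fun r hr => by
    have hr' : ((1 : G), r) = (r, 1)⁻¹ * (r, r) := by ext <;> simp
    change ((1 : G), r) ∈ H
    rw [hr']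
    exact mul_mem (inv_mem (hR r hr)) (hdiag r)
  exact normalClosure_le_normal hRK hn

theorem equalizer_normalClosure_le {R : Set G} {H : Subgroup (G × G)}
    (hdiag : ∀ g : G, (g, g) ∈ H) (hR : ∀ r ∈ R, (r, 1) ∈ H) :
    (normalClosure R).equalizer ≤ H := by
  rintro ⟨u, v⟩ huv
  have hfactor : (u, v) = (u, u) * ((1 : G), u⁻¹ * v) := by ext <;> simp
  rw [hfactor]
  exact mul_mem (hdiag u) (one_prod_mem_of_mem_normalClosure hdiag hR (mem_equalizer.1 huv))

end Subgroup

open Subgroup in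
theorem equalizer_eq_closure_of_generators_general
    (G : Type*) [Group G] (X : Finset G)
    (hXgen : Subgroup.closure (X : Set G) = ⊤)
    (R : Finset G) :
    {p : G × G | p.1⁻¹ * p.2 ∈ Subgroup.normalClosure (R : Set G)} =
      (Subgroup.closure
        ((fun r : G => (r, (1 : G))) '' (R : Set G) ∪
          (fun x : G => (x, x)) '' (X : Set G)) : Set (G × G)) := by
  set H := closure ((fun r : G => (r, (1 : G))) '' (R : Set G) ∪
    (fun x : G => (x, x)) '' (X : Set G))
  have hdiag : ∀ g : G, (g, g) ∈ H :=
    prod_self_mem_of_closure_eq_top hXgen fun x hx => subset_closure (Or.inr ⟨x, hx, rfl⟩)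
  have hR : ∀ r ∈ (R : Set G), (r, (1 : G)) ∈ H :=
    fun r hr => subset_closure (Or.inl ⟨r, hr, rfl⟩)
  have hH : H ≤ (normalClosure (R : Set G)).equalizer := by
    rw [closure_le]
    rintro _ (⟨r, hr, rfl⟩ | ⟨x, -, rfl⟩)
    · simpa [mem_equalizer] using subset_normalClosure hr
    · simp [mem_equalizer]
  calc {p : G × G | p.1⁻¹ * p.2 ∈ normalClosure (R : Set G)}
      = ((normalClosure (R : Set G)).equalizer : Set (G × G)) :=
        Set.ext fun _ => (mem_equalizer (N := normalClosure (R : Set G))).symm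
    _ = H := congrArg _ (le_antisymm (equalizer_normalClosure_le hdiag hR) hH)

/-- Mikhailova-type construction: for `G` generated by a finite symmetric set `X`, `R ⊆ G`
finite and symmetric with normal closure `N`, the equalizer
`E(G,N) = {(u,v) : u⁻¹v ∈ N}` is a subgroup of `G × G` generated by the finite set
`D = {(r,1) : r ∈ R} ∪ {(x,x) : x ∈ X}`. -/
theorem equalizer_eq_closure_of_generators
    (G : Type*) [Group G] (X : Finset G)
    (hXgen : Subgroup.closure (X : Set G) = ⊤)
    (hXsym : (X : Set G) = (X : Set G)⁻¹)
    (R : Finset G)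
    (hRsym : (R : Set G) = (R : Set G)⁻¹) :
    {p : G × G | p.1⁻¹ * p.2 ∈ Subgroup.normalClosure (R : Set G)} =
      (Subgroup.closure
        ((fun r : G => (r, (1 : G))) '' (R : Set G) ∪
          (fun x : G => (x, x)) '' (X : Set G)) : Set (G × G)) :=
  equalizer_eq_closure_of_generators_general G X hXgen R
end

section
/- Let G be a group generated by a finite set X with X = X⁻¹, let R be a finite subset of G with R = R⁻¹, let N be the normal closure of R in G, let E(G,N) = {(u, v) ∈ G × G : u⁻¹v ∈ N}, and let D = {(r, 1) : r ∈ R} ∪ {(x, x) : x ∈ X}. Then for every w ∈ G, if (w, 1) is equal in G × G to a product of n elements of D, then there exist m ≤ n, elements g₁, …, g_m ∈ G and r₁, …, r_m ∈ R such that w = (g₁ r₁ g₁⁻¹)(g₂ r₂ g₂⁻¹) ⋯ (g_m r_m g_m⁻¹) in G. -/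
/-!
Put `φ (u, v) = u * v⁻¹`. Left multiplication by `(r, 1)` turns `φ p` into `r * φ p`, while
left multiplication by `(x, x)` turns it into the conjugate `x * φ p * x⁻¹`. So, by induction
on the length, `φ` of a product of `n` elements of `D` is a product of at most `n` conjugates
of elements of `R`, and `φ (w, 1) = w`.
-/

open Group

section

variable {G : Type*} [Group G]

theorem exists_list_conjugatesOfSet_prod_eq_fst_mul_inv_snd (R X : Set G) :
    ∀ l : List (G × G),
      (∀ d ∈ l, d ∈ ((fun r : G => (r, (1 : G))) '' R ∪ (fun x : G => (x, x)) '' X)) →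
      ∃ L : List G, L.length ≤ l.length ∧ (∀ c ∈ L, c ∈ conjugatesOfSet R) ∧
        l.prod.1 * l.prod.2⁻¹ = L.prod
  | [], _ => ⟨[], le_rfl, by simp, by simp⟩
  | d :: t, hl => by
    obtain ⟨L, hlen, hmem, heq⟩ :=
      exists_list_conjugatesOfSet_prod_eq_fst_mul_inv_snd R X t
        fun e he => hl e (List.mem_cons_of_mem d he)
    rcases hl d List.mem_cons_self with ⟨r, hr, rfl⟩ | ⟨x, -, rfl⟩
    · refine ⟨r :: L, by simpa using hlen, ?_, ?_⟩
      · exact List.forall_mem_cons.2 ⟨subset_conjugatesOfSet hr, hmem⟩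
      · simp only [List.prod_cons, Prod.fst_mul, Prod.snd_mul, ← heq]
        group
    · refine ⟨L.map (MulAut.conj x), by simpa using hlen.trans (Nat.le_succ _), ?_, ?_⟩
      · simpa using fun c hc => conj_mem_conjugatesOfSet (hmem c hc)
      · rw [← map_list_prod, ← heq]
        simp only [List.prod_cons, Prod.fst_mul, Prod.snd_mul, MulAut.conj_apply]
        group

theorem exists_conj_ofFn_of_forall_mem_conjugatesOfSet {S : Set G} (L : List G)
    (hL : ∀ c ∈ L, c ∈ conjugatesOfSet S) :
    ∃ (g r : Fin L.length → G), (∀ i, r i ∈ S) ∧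
      L.prod = (List.ofFn fun i => g i * r i * (g i)⁻¹).prod := by
  have hconj (i : Fin L.length) : ∃ g, ∃ r ∈ S, g * r * g⁻¹ = L.get i := by
    obtain ⟨r, hr, hrc⟩ := mem_conjugatesOfSet_iff.1 (hL _ (L.get_mem i))
    exact (isConj_iff.1 hrc).imp fun g hg => ⟨r, hr, hg⟩
  choose g r hr hgr using hconj
  refine ⟨g, r, hr, ?_⟩
  simp only [hgr, List.ofFn_get]

end

theorem mem_of_prod_generators_equalizer_general
    (G : Type*) [Group G] (X : Finset G)
    (R : Finset G)
    (w : G) (l : List (G × G))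
    (hl : ∀ d ∈ l,
      d ∈ ((fun r : G => (r, (1 : G))) '' (R : Set G) ∪ (fun x : G => (x, x)) '' (X : Set G)))
    (hprod : l.prod = (w, 1)) :
    ∃ m : ℕ, m ≤ l.length ∧
      ∃ (g : Fin m → G) (r : Fin m → G),
        (∀ i, r i ∈ R) ∧
        w = (List.ofFn fun i => g i * r i * (g i)⁻¹).prod := by
  obtain ⟨L, hlen, hmem, heq⟩ := exists_list_conjugatesOfSet_prod_eq_fst_mul_inv_snd _ _ l hl
  rw [hprod, inv_one, mul_one] at heq
  obtain ⟨g, r, hr, hL⟩ := exists_conj_ofFn_of_forall_mem_conjugatesOfSet L hmem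
  exact ⟨L.length, hlen, g, r, hr, heq.trans hL⟩

/-- Quantitative Mikhailova lemma: if `(w, 1)` is a product of `n` elements of
`D = {(r,1) : r ∈ R} ∪ {(x,x) : x ∈ X}` in `G × G`, then `w` is a product of `m ≤ n`
conjugates of elements of `R`. -/
theorem mem_of_prod_generators_equalizer
    (G : Type*) [Group G] (X : Finset G)
    (hXgen : Subgroup.closure (X : Set G) = ⊤)
    (hXsym : (X : Set G) = (X : Set G)⁻¹)
    (R : Finset G)
    (hRsym : (R : Set G) = (R : Set G)⁻¹)
    (w : G) (l : List (G × G))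
    (hl : ∀ d ∈ l,
      d ∈ ((fun r : G => (r, (1 : G))) '' (R : Set G) ∪ (fun x : G => (x, x)) '' (X : Set G)))
    (hprod : l.prod = (w, 1)) :
    ∃ m : ℕ, m ≤ l.length ∧
      ∃ (g : Fin m → G) (r : Fin m → G),
        (∀ i, r i ∈ R) ∧
        w = (List.ofFn fun i => g i * r i * (g i)⁻¹).prod :=
  mem_of_prod_generators_equalizer_general G X R w l hl hprod
end

section
/- Let S be a semigroup with a zero element 0 (an element with 0·x = x·0 = 0 for all x ∈ S). Say that y ∈ S divides z ∈ S if z = y, or z = py, or z = yq, or z = pyq for some p, q ∈ S. If every element z ≠ 0 of S has only finitely many divisors, then S is residually finite: for every pair of distinct elements s, t ∈ S there is a homomorphism φ from S to a finite semigroup with φ(s) ≠ φ(t). -/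
/-!
If `w ≠ 0`, its set `D` of divisors is finite, contains `w`, and contains both factors of each of
its products, so its complement is an ideal. Collapsing that ideal to a single element (the Rees
quotient) gives a semigroup with at most `|D| + 1` elements in which `w` is still distinguished
from every other element. Of two distinct elements at least one is nonzero, so they are separated.
-/

section

variable {S : Type*}

def twoSidedDivisors [Mul S] (w : S) : Set S :=
  {y : S | w = y ∨ (∃ p, w = p * y) ∨ (∃ q, w = y * q) ∨ ∃ p q, w = p * y * q}

theorem mem_twoSidedDivisors_self [Mul S] (w : S) : w ∈ twoSidedDivisors w :=
  Or.inl rfl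

theorem mem_twoSidedDivisors_of_mul_mem [Semigroup S] {w a b : S}
    (h : a * b ∈ twoSidedDivisors w) :
    a ∈ twoSidedDivisors w ∧ b ∈ twoSidedDivisors w := by
  rcases h with h | ⟨p, h⟩ | ⟨q, h⟩ | ⟨p, q, h⟩
  · exact ⟨Or.inr (Or.inr (Or.inl ⟨b, h⟩)), Or.inr (Or.inl ⟨a, h⟩)⟩
  · exact ⟨Or.inr (Or.inr (Or.inr ⟨p, b, by rw [h, mul_assoc]⟩)),
      Or.inr (Or.inl ⟨p * a, by rw [h, mul_assoc]⟩)⟩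
  · exact ⟨Or.inr (Or.inr (Or.inl ⟨b * q, by rw [h, mul_assoc]⟩)),
      Or.inr (Or.inr (Or.inr ⟨a, q, h⟩))⟩
  · exact ⟨Or.inr (Or.inr (Or.inr ⟨p, b * q, by rw [h]; simp only [mul_assoc]⟩)),
      Or.inr (Or.inr (Or.inr ⟨p * a, q, by rw [h]; simp only [mul_assoc]⟩))⟩

section Rees

variable [Mul S] (D : Set S) (hD : ∀ a b : S, a * b ∈ D → a ∈ D ∧ b ∈ D)

/-- The Rees congruence of the ideal `Dᶜ`. -/
def reesCon : Con S where
  r x y := x ∈ D ∨ y ∈ D → x = y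
  iseqv :=
    { refl _ _ := rfl
      symm h hy := (h hy.symm).symm
      trans {x y z} hxy hyz hxz := by
        by_cases hy : y ∈ D
        · exact (hxy (Or.inr hy)).trans (hyz (Or.inl hy))
        · rcases hxz with hx | hz
          · exact absurd (hxy (Or.inl hx) ▸ hx) hy
          · exact absurd ((hyz (Or.inr hz)).symm ▸ hz) hy }
  mul' {x x' y y'} hx hy hxy := by
    rcases hxy with h | h
    · rw [hx (Or.inl (hD _ _ h).1), hy (Or.inl (hD _ _ h).2)]
    · rw [hx (Or.inr (hD _ _ h).1), hy (Or.inr (hD _ _ h).2)]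

variable {D}

theorem reesCon_mk_ne {s t : S} (hs : s ∈ D) (hst : s ≠ t) :
    (s : (reesCon D hD).Quotient) ≠ t :=
  fun h => hst ((Con.eq _).mp h (Or.inl hs))

theorem finite_reesCon_quotient (hfin : D.Finite) : Finite (reesCon D hD).Quotient := by
  classical
  have : Finite D := hfin
  let g : S → Option D := fun x => if h : x ∈ D then some ⟨x, h⟩ else none
  refine Finite.of_injective (fun q => (reesCon D hD).liftOn q g ?_) ?_
  · intro x y hxy
    by_cases hx : x ∈ D
    · rw [hxy (Or.inl hx)]
    · by_cases hy : y ∈ D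
      · rw [hxy (Or.inr hy)]
      · simp only [g, dif_neg hx, dif_neg hy]
  · intro q₁ q₂ h
    induction q₁ using Con.induction_on
    induction q₂ using Con.induction_on
    refine (Con.eq _).mpr fun hxy => ?_
    change g _ = g _ at h
    simp only [g] at h
    split_ifs at h <;> simp_all

end Rees

theorem exists_mulHom_finite_type_of_ne [Mul S] {T : Type*} [Semigroup T] [Finite T]
    (φ : S →ₙ* T) {s t : S} (h : φ s ≠ φ t) :
    ∃ (T' : Type) (_ : Semigroup T') (_ : Finite T') (ψ : S →ₙ* T'), ψ s ≠ ψ t := by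
  let ψ : S →ₙ* Shrink.{0} T := (Shrink.mulEquiv.symm : T ≃* Shrink.{0} T).toMulHom.comp φ
  exact ⟨Shrink.{0} T, inferInstance, inferInstance, ψ, fun h' => h (by simpa [ψ] using h')⟩

theorem exists_finite_separating_of_finite_twoSidedDivisors [Semigroup S] {s t : S}
    (hst : s ≠ t) (hfin : (twoSidedDivisors s).Finite) :
    ∃ (T : Type) (_ : Semigroup T) (_ : Finite T) (φ : S →ₙ* T), φ s ≠ φ t :=
  have hD : ∀ a b, a * b ∈ twoSidedDivisors s → _ := fun _ _ => mem_twoSidedDivisors_of_mul_mem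
  have := finite_reesCon_quotient hD hfin
  exists_mulHom_finite_type_of_ne (reesCon _ hD).mkMulHom
    (reesCon_mk_ne hD (mem_twoSidedDivisors_self s) hst)

end

theorem residually_finite_of_finitely_many_divisors_general
    (S : Type*) [Semigroup S] (z : S)
    (hfin : ∀ w : S, w ≠ z →
      {y : S | w = y ∨ (∃ p, w = p * y) ∨ (∃ q, w = y * q) ∨ ∃ p q, w = p * y * q}.Finite) :
    ∀ s t : S, s ≠ t →
      ∃ (T : Type) (_ : Semigroup T) (_ : Finite T) (φ : S →ₙ* T), φ s ≠ φ t := by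
  intro s t hst
  by_cases hs : s = z
  · obtain ⟨T, hT, hTfin, φ, h⟩ :=
      exists_finite_separating_of_finite_twoSidedDivisors hst.symm (hfin t (hs ▸ hst.symm))
    exact ⟨T, hT, hTfin, φ, h.symm⟩
  · exact exists_finite_separating_of_finite_twoSidedDivisors hst (hfin s hs)

/-- A semigroup with zero in which every nonzero element has only finitely many divisors is
residually finite: any two distinct elements are separated by a homomorphism to a finite
semigroup. Here `y` divides `z` if `z = y`, `z = py`, `z = yq`, or `z = pyq`. -/
theorem residually_finite_of_finitely_many_divisors
    (S : Type*) [Semigroup S] (z : S)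
    (hz : ∀ x : S, z * x = z ∧ x * z = z)
    (hfin : ∀ w : S, w ≠ z →
      {y : S | w = y ∨ (∃ p, w = p * y) ∨ (∃ q, w = y * q) ∨ ∃ p q, w = p * y * q}.Finite) :
    ∀ s t : S, s ≠ t →
      ∃ (T : Type) (_ : Semigroup T) (_ : Finite T) (φ : S →ₙ* T), φ s ≠ φ t :=
  residually_finite_of_finitely_many_divisors_general S z hfin
end

section
/- (Baumslag–Remeslennikov, in the case f(t) = t − 1.) Let H be a group generated by X ∪ F ∪ F', where F = {a₁, …, a_m} and F' = {a'₁, …, a'_m}, and suppose: (1) the subgroup of H generated by F ∪ F' is abelian; (2) for every i ∈ {1, …, m} and every x ∈ X, (aᵢ⁻¹ x aᵢ) x⁻¹ = (a'ᵢ)⁻¹ x a'ᵢ; (3) for all x₁, x₂ ∈ X and all α₁, …, α_m ∈ {−1, 0, 1}, the element z⁻¹ x₁ z commutes with x₂, where z = a₁^{α₁} a₂^{α₂} ⋯ a_m^{α_m}. Then the normal closure of X in H is abelian, and consequently H is metabelian (its second derived subgroup is trivial). -/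
/-!
Let `A` be the abelian group generated by the `aᵢ` and `a'ᵢ`. For `k ∈ A` and `x ∈ X`, condition (2)
gives `x^(k aᵢ) = x^(k a'ᵢ) · x^k`, so the set `Z` of those `k ∈ A` for which `X^k` commutes
elementwise with `X` contains any one of `k, k a'ᵢ, k aᵢ` as soon as it contains the other two; it is
also closed under inversion. From `k, k aᵢ ∈ Z` these rules reach every `k aᵢ^s a'ᵢ^t`, so the cube of
condition (3) forces `Z = A`. Hence the conjugates of `X` by `A` pairwise commute; they generate a
subgroup that is normalized by `X` and by `A`, hence normal, and it contains the normal closure `N`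
of `X`. Finally `H ⧸ N` is an image of `A`, so `H' ≤ N` and `H'' = 1`.
-/

open Subgroup

lemma mul_zpow_mem_of_forall_mul_mem {G : Type*} [Group G] {S : Set G} {g : G}
    (h : ∀ k ∈ S, k * g ∈ S ∧ k * g⁻¹ ∈ S) {k : G} (hk : k ∈ S) (s : ℤ) : k * g ^ s ∈ S := by
  induction s using Int.induction_on with
  | zero => simpa using hk
  | succ s ih => simpa [zpow_add_one, mul_assoc] using (h _ ih).1
  | pred s ih => simpa [zpow_sub_one, mul_assoc] using (h _ ih).2

section TwoOfThree

variable {G : Type*}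

def TwoOfThree (Z : Set G) (u v w : G) : Prop :=
  (u ∈ Z → v ∈ Z → w ∈ Z) ∧ (u ∈ Z → w ∈ Z → v ∈ Z) ∧ (v ∈ Z → w ∈ Z → u ∈ Z)

variable [CommGroup G] {Z : Set G}

lemma TwoOfThree.of_inv (hinv : ∀ k ∈ Z, k⁻¹ ∈ Z) {b c k : G}
    (h : TwoOfThree Z k⁻¹ (k⁻¹ * b) (k⁻¹ * c)) : TwoOfThree Z k (k * b⁻¹) (k * c⁻¹) := by
  have hmem : ∀ g, g⁻¹ ∈ Z ↔ g ∈ Z := fun g => ⟨fun hg => by simpa using hinv _ hg, hinv g⟩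
  unfold TwoOfThree
  rw [← hmem k, ← hmem (k * b⁻¹), ← hmem (k * c⁻¹)]
  simp only [mul_inv, inv_inv]
  exact h

section Line

variable {b c : G} (hinv : ∀ k ∈ Z, k⁻¹ ∈ Z) (htri : ∀ k, TwoOfThree Z k (k * b) (k * c))
include hinv htri

lemma TwoOfThree.pair_mem_mul {k : G} (h₀ : k ∈ Z) (h₁ : k * c ∈ Z) :
    ∀ g ∈ ({c, c⁻¹, b, b⁻¹} : Set G), k * g ∈ Z ∧ k * g * c ∈ Z := by
  have htri' : ∀ k, TwoOfThree Z k (k * b⁻¹) (k * c⁻¹) := fun k => .of_inv hinv (htri k⁻¹)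
  -- Writing `(s, t)` for `k * c ^ s * b ^ t`, walk from `(0, 0), (1, 0)` to
  -- `(0, 1), (1, -1), (0, -1), (-1, 0), (2, -1), (2, 0), (1, 1)`.
  have hb : k * b ∈ Z := (htri k).2.1 h₀ h₁
  have hcb' : k * c * b⁻¹ ∈ Z := (htri' (k * c)).2.1 h₁ (by rwa [mul_inv_cancel_right])
  have hb' : k * b⁻¹ ∈ Z :=
    (htri (k * b⁻¹)).2.2 (by rwa [inv_mul_cancel_right]) (by rwa [mul_right_comm])
  have hc' : k * c⁻¹ ∈ Z := (htri' k).1 h₀ hb'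
  have hccb' : k * c * c * b⁻¹ ∈ Z := by
    have := (htri (k * c * b⁻¹)).1 hcb' (by rwa [inv_mul_cancel_right])
    rwa [mul_right_comm _ b⁻¹] at this
  have hcc : k * c * c ∈ Z := (htri' (k * c * c)).2.2 hccb' (by rwa [mul_inv_cancel_right])
  have hcb : k * c * b ∈ Z := (htri (k * c)).2.1 h₁ hcc
  rintro g (rfl | rfl | rfl | rfl)
  · exact ⟨h₁, hcc⟩
  · exact ⟨hc', by rwa [inv_mul_cancel_right]⟩
  · exact ⟨hb, by rwa [mul_right_comm]⟩
  · exact ⟨hb', by rwa [mul_right_comm]⟩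

lemma TwoOfThree.mul_zpow_mul_zpow_mem {k : G} (h₀ : k ∈ Z) (h₁ : k * c ∈ Z) (s t : ℤ) :
    k * c ^ s * b ^ t ∈ Z := by
  set P : Set G := {k | k ∈ Z ∧ k * c ∈ Z}
  have step : ∀ g ∈ ({c, c⁻¹, b, b⁻¹} : Set G), ∀ k ∈ P, k * g ∈ P :=
    fun g hg k hk => pair_mem_mul hinv htri hk.1 hk.2 g hg
  have hs := mul_zpow_mem_of_forall_mul_mem
    (fun k hk => ⟨step c (by simp) k hk, step c⁻¹ (by simp) k hk⟩) ⟨h₀, h₁⟩ s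
  exact (mul_zpow_mem_of_forall_mul_mem
    (fun k hk => ⟨step b (by simp) k hk, step b⁻¹ (by simp) k hk⟩) hs t).1

end Line

theorem TwoOfThree.closure_subset {ι : Type*} {b c : ι → G} (hinv : ∀ k ∈ Z, k⁻¹ ∈ Z)
    (htri : ∀ i k, TwoOfThree Z k (k * b i) (k * c i))
    (hcube : ∀ T : Finset ι, ∏ i ∈ T, c i ∈ Z) :
    (closure (Set.range c ∪ Set.range b) : Set G) ⊆ Z := by
  classical
  set W : Set G := {k | ∀ T : Finset ι, k * ∏ i ∈ T, c i ∈ Z}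
  have hW : ∀ i, ∀ k ∈ W, ∀ s t : ℤ, k * (c i ^ s * b i ^ t) ∈ W := by
    intro i k hk s t T
    have h₀ := hk (T.erase i)
    have h₁ : (k * ∏ j ∈ T.erase i, c j) * c i ∈ Z := by
      simpa [Finset.prod_insert (Finset.notMem_erase i T), mul_comm, mul_left_comm, mul_assoc]
        using hk (insert i (T.erase i))
    have line := mul_zpow_mul_zpow_mem hinv (htri i) h₀ h₁
    by_cases hi : i ∈ T
    · simpa [← Finset.mul_prod_erase T c hi, zpow_add_one, mul_comm, mul_left_comm, mul_assoc]
        using line (s + 1) t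
    · simpa [Finset.erase_eq_of_notMem hi, mul_comm, mul_left_comm, mul_assoc] using line s t
  intro g hg
  have hmul : ∀ k ∈ W, k * g ∈ W := by
    induction hg using closure_induction'' with
    | mem g hg =>
      rcases hg with ⟨i, rfl⟩ | ⟨i, rfl⟩
      · exact fun k hk => by simpa using hW i k hk 1 0
      · exact fun k hk => by simpa using hW i k hk 0 1
    | inv_mem g hg =>
      rcases hg with ⟨i, rfl⟩ | ⟨i, rfl⟩
      · exact fun k hk => by simpa using hW i k hk (-1) 0
      · exact fun k hk => by simpa using hW i k hk 0 (-1)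
    | one => simp
    | mul g h _ _ hg hh => exact fun k hk => by simpa [mul_assoc] using hh _ (hg k hk)
  simpa using hmul 1 (fun T => by simpa using hcube T) ∅

end TwoOfThree

section ConjCommutes

variable {H : Type*} [Group H] (X : Set H)

def ConjCommutes (g : H) : Prop :=
  ∀ x₁ ∈ X, ∀ x₂ ∈ X, Commute (g⁻¹ * x₁ * g) x₂

variable {X}

lemma ConjCommutes.inv {g : H} (h : ConjCommutes X g) : ConjCommutes X g⁻¹ := by
  intro x₁ hx₁ x₂ hx₂
  have := (h x₂ hx₂ x₁ hx₁).map (MulAut.conj g)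
  simpa [mul_assoc] using this.symm

lemma twoOfThree_conjCommutes {b c k : H} (hX : ∀ x ∈ X, c⁻¹ * x * c * x⁻¹ = b⁻¹ * x * b)
    (hkb : Commute k b) (hkc : Commute k c) :
    TwoOfThree {g | ConjCommutes X g} k (k * b) (k * c) := by
  have key : ∀ x ∈ X, (k * c)⁻¹ * x * (k * c) = ((k * b)⁻¹ * x * (k * b)) * (k⁻¹ * x * k) := by
    intro x hx
    have hx' : c⁻¹ * x * c = b⁻¹ * x * b * x := by rw [← hX x hx, inv_mul_cancel_right]
    rw [hkc.eq, hkb.eq]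
    calc (c * k)⁻¹ * x * (c * k) = k⁻¹ * (c⁻¹ * x * c) * k := by group
      _ = _ := by rw [hx']; group
  refine ⟨fun hk hkb x₁ h₁ x₂ h₂ => ?_, fun hk hkc x₁ h₁ x₂ h₂ => ?_,
    fun hkb hkc x₁ h₁ x₂ h₂ => ?_⟩
  · rw [key x₁ h₁]
    exact (hkb x₁ h₁ x₂ h₂).mul_left (hk x₁ h₁ x₂ h₂)
  · have := (hkc x₁ h₁ x₂ h₂).mul_left (hk x₁ h₁ x₂ h₂).inv_left
    rwa [key x₁ h₁, mul_inv_cancel_right] at this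
  · have := (hkb x₁ h₁ x₂ h₂).inv_left.mul_left (hkc x₁ h₁ x₂ h₂)
    rwa [key x₁ h₁, inv_mul_cancel_left] at this

open scoped IsMulCommutative in
theorem coe_finsetProd_eq_ofFn_prod {A : Subgroup H} [IsMulCommutative A] {m : ℕ}
    (f : Fin m → A) (T : Finset (Fin m)) :
    ((∏ i ∈ T, f i : A) : H) =
      (List.ofFn fun i => (f i : H) ^ (if i ∈ T then 1 else 0 : ℤ)).prod := by
  have : ∏ i ∈ T, f i = ∏ i, f i ^ (if i ∈ T then 1 else 0 : ℤ) := by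
    simp [Finset.prod_ite_mem]
  rw [this, ← List.prod_ofFn, SubmonoidClass.coe_list_prod, List.map_ofFn]
  simp only [Function.comp_def, coe_zpow]

open scoped IsMulCommutative in
theorem conjCommutes_of_mem_closure {m : ℕ} (a a' : Fin m → H)
    [IsMulCommutative (closure (Set.range a ∪ Set.range a'))]
    (h2 : ∀ i, ∀ x ∈ X, (a i)⁻¹ * x * a i * x⁻¹ = (a' i)⁻¹ * x * a' i)
    (hcube : ∀ α : Fin m → ℤ, (∀ i, α i = 0 ∨ α i = 1) →
      ConjCommutes X (List.ofFn fun i => a i ^ α i).prod) :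
    ∀ g ∈ closure (Set.range a ∪ Set.range a'), ConjCommutes X g := by
  set A := closure (Set.range a ∪ Set.range a')
  set c : Fin m → A := fun i => ⟨a i, subset_closure (.inl ⟨i, rfl⟩)⟩
  set b : Fin m → A := fun i => ⟨a' i, subset_closure (.inr ⟨i, rfl⟩)⟩
  have hgen : closure (Set.range c ∪ Set.range b) = ⊤ := by
    convert closure_closure_coe_preimage (k := Set.range a ∪ Set.range a')
    ext g
    simp [c, b, Subtype.ext_iff]
  have hZ := TwoOfThree.closure_subset (Z := {g : A | ConjCommutes X g}) (b := b) (c := c)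
    (fun k hk => hk.inv) (fun i k => twoOfThree_conjCommutes (h2 i)
      (congrArg Subtype.val (mul_comm k (b i))) (congrArg Subtype.val (mul_comm k (c i))))
    (fun T => by
      change ConjCommutes X ↑(∏ i ∈ T, c i)
      rw [coe_finsetProd_eq_ofFn_prod]
      exact hcube _ fun i => by split_ifs <;> simp)
  intro g hg
  exact hZ (hgen ▸ mem_top (⟨g, hg⟩ : A))

theorem isMulCommutative_normalClosure {A : Subgroup H} (hXA : closure X ⊔ A = ⊤)
    (hA : ∀ g ∈ A, ConjCommutes X g) : IsMulCommutative (normalClosure X) := by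
  set S : Set H := {y | ∃ g ∈ A, ∃ x ∈ X, g⁻¹ * x * g = y}
  have hXS : X ⊆ closure S := fun x hx => subset_closure ⟨1, one_mem A, x, hx, by group⟩
  have hS : ∀ y ∈ S, ∀ z ∈ S, y * z = z * y := by
    rintro _ ⟨g₁, hg₁, x₁, hx₁, rfl⟩ _ ⟨g₂, hg₂, x₂, hx₂, rfl⟩
    have := (hA _ (mul_mem hg₁ (inv_mem hg₂)) x₁ hx₁ x₂ hx₂).map (MulAut.conj g₂⁻¹)
    simpa [mul_assoc] using this.eq
  have hAS : A ≤ normalizer (closure S) := le_normalizer_closure_iff.mpr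
    fun h hh _ ⟨g, hg, x, hx, hy⟩ => subset_closure
      ⟨g * h⁻¹, mul_mem hg (inv_mem hh), x, hx, by rw [← hy]; group⟩
  have : (closure S).Normal := normalizer_eq_top_iff.mp <| top_le_iff.mp <|
    hXA ▸ sup_le ((closure_le _).mpr hXS |>.trans le_normalizer) hAS
  have := isMulCommutative_closure hS
  exact .of_setLike_mul_comm fun u hu v hv =>
    setLike_mul_comm (normalClosure_le_normal hXS hu) (normalClosure_le_normal hXS hv)

end ConjCommutes

theorem derivedSeries_two_eq_bot_of_sup_eq_top {G : Type*} [Group G] {N A : Subgroup G}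
    [N.Normal] [IsMulCommutative N] [IsMulCommutative A] (hNA : N ⊔ A = ⊤) :
    derivedSeries G 2 = ⊥ := by
  have h₁ : derivedSeries G 1 ≤ N := by
    rw [derivedSeries_one]
    exact Normal.commutator_le_of_self_sup_commutative_eq_top hNA ‹_›
  rw [derivedSeries_succ, eq_bot_iff]
  exact (commutator_mono h₁ h₁).trans (commutator_self_eq_bot_iff.mpr ‹_›).le

/-- Baumslag–Remeslennikov lemma (case `f(t) = t - 1`): if `H` is generated by
`X ∪ {a₁,…,a_m} ∪ {a'₁,…,a'_m}` such that (1) the subgroup generated by the `aᵢ` and `a'ᵢ`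
is abelian, (2) `x^{aᵢ} x⁻¹ = x^{a'ᵢ}` for all `x ∈ X` and all `i`, and (3) `x₁^z` commutes
with `x₂` for all `x₁, x₂ ∈ X` and `z = a₁^{α₁} ⋯ a_m^{α_m}` with `αᵢ ∈ {-1,0,1}`, then the
normal closure of `X` in `H` is abelian and `H` is metabelian. -/
theorem baumslag_remeslennikov
    (H : Type*) [Group H] (m : ℕ) (X : Set H) (a a' : Fin m → H)
    (hgen : Subgroup.closure (X ∪ Set.range a ∪ Set.range a') = ⊤)
    (h1 : ∀ u ∈ Subgroup.closure (Set.range a ∪ Set.range a'),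
          ∀ v ∈ Subgroup.closure (Set.range a ∪ Set.range a'), u * v = v * u)
    (h2 : ∀ i : Fin m, ∀ x ∈ X,
          ((a i)⁻¹ * x * a i) * x⁻¹ = (a' i)⁻¹ * x * a' i)
    (h3 : ∀ x₁ ∈ X, ∀ x₂ ∈ X, ∀ α : Fin m → ℤ,
          (∀ i, α i = -1 ∨ α i = 0 ∨ α i = 1) →
          ((List.ofFn fun i => a i ^ α i).prod⁻¹ * x₁ * (List.ofFn fun i => a i ^ α i).prod)
              * x₂ =
            x₂ *
            ((List.ofFn fun i => a i ^ α i).prod⁻¹ * x₁ *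
              (List.ofFn fun i => a i ^ α i).prod)) :
    (∀ u ∈ Subgroup.normalClosure X, ∀ v ∈ Subgroup.normalClosure X, u * v = v * u) ∧
      derivedSeries H 2 = ⊥ := by
  set A := closure (Set.range a ∪ Set.range a')
  have : IsMulCommutative A := .of_setLike_mul_comm h1
  have hXA : closure X ⊔ A = ⊤ := by
    rw [← Subgroup.closure_union, ← Set.union_assoc, hgen]
  have hconj := conjCommutes_of_mem_closure a a' h2 fun α hα x₁ hx₁ x₂ hx₂ =>
    h3 x₁ hx₁ x₂ hx₂ α fun i => (hα i).elim (Or.inr ∘ Or.inl) (Or.inr ∘ Or.inr)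
  have : IsMulCommutative (normalClosure X) := isMulCommutative_normalClosure hXA hconj
  have hNA : normalClosure X ⊔ A = ⊤ :=
    eq_top_mono (sup_le_sup_right closure_le_normalClosure A) hXA
  exact ⟨isMulCommutative_iff_of_setLike.mp this, derivedSeries_two_eq_bot_of_sup_eq_top hNA⟩
end

section
/- Let F be a free group of finite rank, R a finite subset of F, ⟪R⟫ the normal closure of R in F, and G = F/⟪R⟫. If G is residually finite, then the word problem of G is decidable: the set {w ∈ F : w ∈ ⟪R⟫} is computable with respect to a standard encoding of the elements of F. -/
/-!
Membership in `⟪R⟫` is semi-decidable: enumerate all products of conjugates of relators and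
their inverses, and compare free reductions with the given word. Non-membership is
semi-decidable as well: if `w ∉ ⟪R⟫`, residual finiteness and Cayley's theorem give an action
of `F` on some `Fin m` in which every relator acts trivially but `w` does not. Such an action is
determined by the finite table of the generators and their inverses, and a candidate table can
be checked mechanically. A set that is both r.e. and co-r.e. is computable (Post's theorem).
-/

open Primrec

theorem REPred.exists_of_primrecRel {α β : Type*} [Primcodable α] [Primcodable β]
    {p : α → β → Prop} (hp : PrimrecRel p) : REPred fun a => ∃ b, p a b := by
  classical
  let f : α → ℕ → Bool := fun a n => (Encodable.decode (α := β) n).elim false (decide <| p a ·)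
  have hf : Primrec₂ f :=
    (option_casesOn (Primrec.decode.comp snd) (const false)
      (hp.decide.comp (fst.comp fst) snd).to₂).of_eq fun q => by
      cases h : Encodable.decode (α := β) q.2 <;> simp [f, h]
  refine (Partrec.rfind hf.to_comp.partrec₂).dom_re.of_eq fun a => Nat.rfind_dom.trans ?_
  constructor
  · rintro ⟨n, hn, -⟩
    cases h : Encodable.decode (α := β) n with
    | none => simp [f, h] at hn
    | some b => exact ⟨b, by simpa [f, h] using hn⟩
  · rintro ⟨b, hb⟩
    exact ⟨Encodable.encode b, by simpa [f] using hb, fun _ => by simp⟩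

theorem PrimrecRel.forall_fintype {α β : Type*} [Primcodable α] [Primcodable β] [Fintype β]
    {p : α → β → Prop} (hp : PrimrecRel p) : PrimrecPred fun a => ∀ b, p a b :=
  (hp.swap.forall_mem_list.comp (const (Finset.univ : Finset β).toList) Primrec.id).of_eq
    fun a => by simp

theorem PrimrecRel.forall_lt' {β : Type*} [Primcodable β] {R : ℕ → β → Prop}
    (hR : PrimrecRel R) : PrimrecRel fun n b => ∀ x < n, R x b :=
  (hR.forall_mem_list.comp (list_range.comp fst) snd).of_eq fun _ => by simp

theorem PrimrecRel.exists_lt' {β : Type*} [Primcodable β] {R : ℕ → β → Prop}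
    (hR : PrimrecRel R) : PrimrecRel fun n b => ∃ x < n, R x b :=
  (hR.exists_mem_list.comp (list_range.comp fst) snd).of_eq fun _ => by simp

theorem PrimrecPred.mem_list {α : Type*} [Primcodable α] (l : List α) : PrimrecPred (· ∈ l) :=
  ((PrimrecRel.exists_mem_list Primrec.eq).comp (const l) Primrec.id).of_eq fun a => by simp

namespace FreeGroup

variable {α : Type*} [Primcodable α]

theorem primrec_invRev : Primrec (invRev : List (α × Bool) → List (α × Bool)) :=
  list_reverse.comp
    (list_map Primrec.id (Primrec.pair (fst.comp snd) (Primrec.not.comp (snd.comp snd))).to₂)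

variable [DecidableEq α]

theorem primrec_reduce : Primrec (reduce : List (α × Bool) → List (α × Bool)) := by
  let step : α × Bool → List (α × Bool) → List (α × Bool) := fun x ih =>
    List.casesOn ih [x] fun hd tl => if x.1 = hd.1 ∧ x.2 = !hd.2 then tl else x :: hd :: tl
  have hcancel : PrimrecRel fun (x : α × Bool) (q : (α × Bool) × List (α × Bool)) =>
      x.1 = q.1.1 ∧ x.2 = !q.1.2 :=
    (Primrec.eq.comp (fst.comp fst) (fst.comp (fst.comp snd))).and
      (Primrec.eq.comp (snd.comp fst) (Primrec.not.comp (snd.comp (fst.comp snd))))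
  have hstep : Primrec₂ step :=
    list_casesOn snd (list_cons.comp fst (const []))
      (Primrec.ite (hcancel.comp (fst.comp fst) snd) (snd.comp snd)
        (list_cons.comp (fst.comp fst) (list_cons.comp (fst.comp snd) (snd.comp snd)))).to₂
  refine (list_foldr Primrec.id (const []) (hstep.comp (fst.comp snd) (snd.comp snd)).to₂).of_eq
    fun L => ?_
  induction L with
  | nil => rfl
  | cons x L ih => rw [reduce.cons, ← ih]; rfl

theorem primrecRel_mk_eq : PrimrecRel fun u v : List (α × Bool) => mk u = mk v :=
  (Primrec.eq.comp₂ (primrec_reduce.comp₂ Primrec₂.left)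
    (primrec_reduce.comp₂ Primrec₂.right)).of_eq fun u v => by
    rw [← toWord_mk, ← toWord_mk, toWord_injective.eq_iff]

end FreeGroup

theorem Subgroup.mem_normalClosure_iff_exists_list {G : Type*} [Group G] {S : Set G} {g : G} :
    g ∈ normalClosure S ↔ ∃ l : List (G × G), (∀ p ∈ l, p.2 ∈ S ∨ p.2⁻¹ ∈ S) ∧
      (l.map fun p => p.1 * p.2 * p.1⁻¹).prod = g := by
  constructor
  · intro hg
    induction hg using Subgroup.closure_induction with
    | mem x hx =>
      obtain ⟨s, hs, hconj⟩ := Group.mem_conjugatesOfSet_iff.1 hx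
      obtain ⟨c, rfl⟩ := isConj_iff.1 hconj
      exact ⟨[(c, s)], by simp [hs], by simp⟩
    | one => exact ⟨[], by simp, rfl⟩
    | mul x y _ _ hx hy =>
      obtain ⟨l, hl, rfl⟩ := hx
      obtain ⟨l', hl', rfl⟩ := hy
      exact ⟨l ++ l', by simp only [List.mem_append]; grind, by simp⟩
    | inv x _ hx =>
      obtain ⟨l, hl, rfl⟩ := hx
      refine ⟨(l.map fun p => (p.1, p.2⁻¹)).reverse, ?_, ?_⟩
      · simp only [List.mem_reverse, List.mem_map]
        rintro _ ⟨p, hp, rfl⟩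
        simpa [or_comm] using hl p hp
      · simp [List.prod_inv_reverse, Function.comp_def, mul_assoc]
  · rintro ⟨l, hl, rfl⟩
    refine list_prod_mem fun x hx => ?_
    obtain ⟨p, hp, rfl⟩ := List.mem_map.1 hx
    refine normalClosure_normal.conj_mem _ ?_ _
    rcases hl p hp with h | h
    · exact subset_normalClosure h
    · simpa using inv_mem (subset_normalClosure h)

theorem exists_monoidHom_perm_fin_ne_one {G K : Type*} [Group G] [Group K] [Finite K]
    (ψ : G →* K) {g : G} (hg : ψ g ≠ 1) : ∃ (m : ℕ) (χ : G →* Equiv.Perm (Fin m)), χ g ≠ 1 := by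
  obtain ⟨m, ⟨e⟩⟩ := Finite.exists_equiv_fin K
  refine ⟨m, e.permCongrHom.toMonoidHom.comp ((MulAction.toPermHom K K).comp ψ), ?_⟩
  rw [MonoidHom.comp_apply, MulEquiv.coe_toMonoidHom, MulEquiv.map_ne_one_iff]
  intro h
  apply hg
  simpa using congrArg (· 1) h

namespace McKinsey

open FreeGroup

section Derivations

variable {α : Type*}

def conjWord (p : List (α × Bool) × List (α × Bool)) : List (α × Bool) :=
  p.1 ++ p.2 ++ invRev p.1

theorem mk_flatMap_conjWord (L : List (List (α × Bool) × List (α × Bool))) :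
    mk (L.flatMap conjWord) = (L.map fun p => mk p.1 * mk p.2 * (mk p.1)⁻¹).prod := by
  induction L with
  | nil => rfl
  | cons p L ih =>
    rw [List.flatMap_cons, ← mul_mk, ih, List.map_cons, List.prod_cons, conjWord, ← mul_mk,
      ← mul_mk, ← inv_mk]

theorem primrec_conjWord [Primcodable α] : Primrec (conjWord : _ → List (α × Bool)) :=
  list_append.comp (list_append.comp fst snd) (primrec_invRev.comp fst)

variable [DecidableEq α]

noncomputable def relatorWords (R : Finset (FreeGroup α)) : List (List (α × Bool)) :=
  R.toList.flatMap fun r => [r.toWord, r⁻¹.toWord]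

def IsDerivation (R : Finset (FreeGroup α)) (w : List (α × Bool))
    (L : List (List (α × Bool) × List (α × Bool))) : Prop :=
  (∀ p ∈ L, p.2 ∈ relatorWords R) ∧ mk (L.flatMap conjWord) = mk w

variable {R : Finset (FreeGroup α)}

theorem toWord_mem_relatorWords {g : FreeGroup α} (hg : g ∈ R ∨ g⁻¹ ∈ R) :
    g.toWord ∈ relatorWords R := by
  rcases hg with hg | hg
  · exact List.mem_flatMap.2 ⟨g, Finset.mem_toList.2 hg, by simp⟩
  · exact List.mem_flatMap.2 ⟨g⁻¹, Finset.mem_toList.2 hg, by simp⟩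

theorem mk_mem_of_mem_relatorWords {v : List (α × Bool)} (hv : v ∈ relatorWords R) :
    mk v ∈ R ∨ (mk v)⁻¹ ∈ R := by
  obtain ⟨r, hr, hv⟩ := List.mem_flatMap.1 hv
  rw [Finset.mem_toList] at hr
  rcases List.mem_pair.1 hv with rfl | rfl
  · exact Or.inl (by rwa [mk_toWord])
  · exact Or.inr (by rwa [mk_toWord, inv_inv])

theorem mk_mem_normalClosure_iff (w : List (α × Bool)) :
    mk w ∈ Subgroup.normalClosure (R : Set (FreeGroup α)) ↔ ∃ L, IsDerivation R w L := by
  rw [Subgroup.mem_normalClosure_iff_exists_list]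
  constructor
  · rintro ⟨l, hl, hw⟩
    refine ⟨l.map fun p => (p.1.toWord, p.2.toWord), ?_, ?_⟩
    · simp only [List.mem_map]
      rintro _ ⟨p, hp, rfl⟩
      exact toWord_mem_relatorWords (hl p hp)
    · rw [mk_flatMap_conjWord, List.map_map]
      simpa only [Function.comp_def, mk_toWord] using hw
  · rintro ⟨L, hL, hw⟩
    refine ⟨L.map fun p => (mk p.1, mk p.2), ?_, ?_⟩
    · simp only [List.mem_map]
      rintro _ ⟨p, hp, rfl⟩
      exact mk_mem_of_mem_relatorWords (hL p hp)
    · rw [← hw, mk_flatMap_conjWord, List.map_map]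
      rfl

theorem primrecRel_isDerivation [Primcodable α] (R : Finset (FreeGroup α)) :
    PrimrecRel (IsDerivation R) :=
  ((((PrimrecPred.mem_list (relatorWords R)).comp snd).forall_mem_list).comp snd).and
    (primrecRel_mk_eq.comp (list_flatMap snd (primrec_conjWord.comp snd).to₂) fst)

end Derivations

section PermTables

variable {k : ℕ}

/-- `(t i).1` lists the images of `0, 1, …` under the `i`-th generator and `(t i).2` those under
its inverse; entries beyond the lists read as `0`. -/
def letterAct (t : Fin k → List ℕ × List ℕ) (l : Fin k × Bool) (x : ℕ) : ℕ :=
  (bif l.2 then (t l.1).1 else (t l.1).2).getD x 0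

def wordAct (t : Fin k → List ℕ × List ℕ) (w : List (Fin k × Bool)) (x : ℕ) : ℕ :=
  w.foldr (letterAct t) x

def IsPermTable (t : Fin k → List ℕ × List ℕ) (m : ℕ) : Prop :=
  ∀ l, ∀ x < m, letterAct t l x < m ∧ letterAct t (l.1, !l.2) (letterAct t l x) = x

namespace IsPermTable

variable {t : Fin k → List ℕ × List ℕ} {m : ℕ} (h : IsPermTable t m)

def perm (l : Fin k × Bool) : Equiv.Perm (Fin m) where
  toFun x := ⟨letterAct t l x, (h l x x.2).1⟩
  invFun x := ⟨letterAct t (l.1, !l.2) x, (h _ x x.2).1⟩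
  left_inv x := Fin.ext (h l x x.2).2
  right_inv x := Fin.ext (by simpa using (h (l.1, !l.2) x x.2).2)

def hom : FreeGroup (Fin k) →* Equiv.Perm (Fin m) :=
  FreeGroup.lift fun i => h.perm (i, true)

theorem hom_mk_singleton (l : Fin k × Bool) : h.hom (mk [l]) = h.perm l := by
  obtain ⟨i, _ | _⟩ := l
  · rw [hom, lift_mk]
    rfl
  · rw [hom, lift_mk]
    simp

theorem hom_mk_apply (w : List (Fin k × Bool)) (x : Fin m) :
    (h.hom (mk w) x : ℕ) = wordAct t w x := by
  induction w with
  | nil => rfl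
  | cons l w ih =>
    rw [← List.singleton_append, ← mul_mk, h.hom.map_mul, Equiv.Perm.mul_apply, hom_mk_singleton]
    exact congrArg (letterAct t l) ih

end IsPermTable

theorem exists_isPermTable {m : ℕ} (χ : FreeGroup (Fin k) →* Equiv.Perm (Fin m)) :
    ∃ t : Fin k → List ℕ × List ℕ, IsPermTable t m ∧
      ∀ w (x : Fin m), wordAct t w x = χ (mk w) x := by
  let t : Fin k → List ℕ × List ℕ := fun i =>
    ((List.finRange m).map fun x => (χ (of i) x : ℕ),
      (List.finRange m).map fun x => ((χ (of i))⁻¹ x : ℕ))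
  have hletter : ∀ l (x : Fin m),
      letterAct t l x = (bif l.2 then χ (of l.1) else (χ (of l.1))⁻¹) x := by
    rintro ⟨i, _ | _⟩ x <;> simp [letterAct, t]
  have ht : IsPermTable t m := by
    rintro ⟨i, b⟩ x hx
    lift x to Fin m using hx
    rw [hletter, hletter]
    cases b <;> simp
  have hhom : ht.hom = χ :=
    ext_hom _ _ fun i => Equiv.ext fun x => Fin.ext <| by
      simp [IsPermTable.hom, IsPermTable.perm, hletter]
  exact ⟨t, ht, fun w x => by rw [← ht.hom_mk_apply, hhom]⟩

section Primrec

variable {β : Type*} [Primcodable β] {t : β → Fin k → List ℕ × List ℕ}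

theorem primrec_letterAct {l : β → Fin k × Bool} {x : β → ℕ} (ht : Primrec t) (hl : Primrec l)
    (hx : Primrec x) : Primrec fun a => letterAct (t a) (l a) (x a) :=
  have hrow : Primrec fun a => t a (l a).1 := fin_app.comp ht (fst.comp hl)
  (list_getD 0).comp (Primrec.cond (snd.comp hl) (fst.comp hrow) (snd.comp hrow)) hx

theorem primrec_wordAct {w : β → List (Fin k × Bool)} {x : β → ℕ} (ht : Primrec t)
    (hw : Primrec w) (hx : Primrec x) : Primrec fun a => wordAct (t a) (w a) (x a) :=
  list_foldr hw hx (primrec_letterAct (ht.comp fst) (fst.comp snd) (snd.comp snd)).to₂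

end Primrec

theorem primrecRel_isPermTable : PrimrecRel (IsPermTable (k := k)) := by
  have hstep : PrimrecRel fun (x : ℕ) (y : ((Fin k → List ℕ × List ℕ) × ℕ) × (Fin k × Bool)) =>
      letterAct y.1.1 y.2 x < y.1.2 ∧
        letterAct y.1.1 (y.2.1, !y.2.2) (letterAct y.1.1 y.2 x) = x :=
    have hact := primrec_letterAct (fst.comp (fst.comp snd)) (snd.comp snd) fst
    (nat_lt.comp hact (snd.comp (fst.comp snd))).and
      (Primrec.eq.comp (primrec_letterAct (fst.comp (fst.comp snd))
        (Primrec.pair (fst.comp (snd.comp snd)) (Primrec.not.comp (snd.comp (snd.comp snd))))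
        hact) fst)
  exact PrimrecRel.forall_fintype (hstep.forall_lt'.comp (snd.comp fst) Primrec.id)

def IsSeparatingTable (R : Finset (FreeGroup (Fin k))) (w : List (Fin k × Bool)) (m : ℕ)
    (t : Fin k → List ℕ × List ℕ) : Prop :=
  IsPermTable t m ∧ (∀ v ∈ relatorWords R, ∀ x < m, wordAct t v x = x) ∧
    ∃ x < m, wordAct t w x ≠ x

variable {R : Finset (FreeGroup (Fin k))} {w : List (Fin k × Bool)}

theorem mk_notMem_of_isSeparatingTable {m : ℕ} {t : Fin k → List ℕ × List ℕ}
    (h : IsSeparatingTable R w m t) :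
    mk w ∉ Subgroup.normalClosure (R : Set (FreeGroup (Fin k))) := by
  obtain ⟨ht, hR, x, hx, hw⟩ := h
  have hker : Subgroup.normalClosure (R : Set (FreeGroup (Fin k))) ≤ ht.hom.ker := by
    refine Subgroup.normalClosure_le_normal fun r hr => Equiv.ext fun y => Fin.ext ?_
    rw [← mk_toWord (x := r), ht.hom_mk_apply]
    exact hR _ (toWord_mem_relatorWords (Or.inl hr)) y y.2
  intro hmem
  apply hw
  rw [← ht.hom_mk_apply w ⟨x, hx⟩, (hker hmem : ht.hom (mk w) = 1)]
  rfl

theorem exists_isSeparatingTable {m : ℕ} (χ : FreeGroup (Fin k) →* Equiv.Perm (Fin m))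
    (hR : ∀ r ∈ R, χ r = 1) (hw : χ (mk w) ≠ 1) :
    ∃ c : ℕ × (Fin k → List ℕ × List ℕ), IsSeparatingTable R w c.1 c.2 := by
  obtain ⟨t, ht, hact⟩ := exists_isPermTable χ
  obtain ⟨x, hx⟩ : ∃ x, χ (mk w) x ≠ x := by
    by_contra! h
    exact hw (Equiv.ext h)
  refine ⟨(m, t), ht, fun v hv y hy => ?_, x, x.2, ?_⟩
  · have hv1 : χ (mk v) = 1 := by
      rcases mk_mem_of_mem_relatorWords hv with h | h
      · exact hR _ h
      · rw [← inv_inv (mk v), χ.map_inv, hR _ h, inv_one]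
    rw [hact v ⟨y, hy⟩, hv1]
    rfl
  · rw [hact]
    exact Fin.val_injective.ne hx

theorem primrecRel_isSeparatingTable (R : Finset (FreeGroup (Fin k))) :
    PrimrecRel fun w (c : ℕ × (Fin k → List ℕ × List ℕ)) => IsSeparatingTable R w c.1 c.2 := by
  have hfix : PrimrecRel fun (x : ℕ) (y : List (Fin k × Bool) × (Fin k → List ℕ × List ℕ)) =>
      wordAct y.2 y.1 x = x :=
    Primrec.eq.comp (primrec_wordAct (snd.comp snd) (fst.comp snd) fst) fst
  have hrelators : PrimrecRel fun (v : List (Fin k × Bool)) (c : ℕ × (Fin k → List ℕ × List ℕ)) =>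
      ∀ x < c.1, wordAct c.2 v x = x :=
    hfix.forall_lt'.comp (fst.comp snd) (Primrec.pair fst (snd.comp snd))
  exact (primrecRel_isPermTable.comp (snd.comp snd) (fst.comp snd)).and
    ((hrelators.forall_mem_list.comp (const (relatorWords R)) snd).and
      (hfix.not.exists_lt'.comp (fst.comp snd) (Primrec.pair fst (snd.comp snd))))

end PermTables

end McKinsey

/-- McKinsey's algorithm: if the finitely presented group `G = F_k/⟪R⟫` is residually
finite, then its word problem is decidable — the set of words (over the generators and their
formal inverses) representing elements of the normal closure `⟪R⟫` is computable. -/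
theorem word_problem_decidable_of_finitely_presented_residually_finite
    (k : ℕ) (R : Finset (FreeGroup (Fin k)))
    (hres : ∀ g : FreeGroup (Fin k) ⧸ Subgroup.normalClosure (R : Set (FreeGroup (Fin k))),
      g ≠ 1 → ∃ (K : Type) (_ : Group K) (_ : Finite K)
        (φ : (FreeGroup (Fin k) ⧸ Subgroup.normalClosure (R : Set (FreeGroup (Fin k)))) →* K),
        φ g ≠ 1) :
    ComputablePred (fun l : List (Fin k × Bool) =>
      FreeGroup.mk l ∈ Subgroup.normalClosure (R : Set (FreeGroup (Fin k)))) := by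
  rw [ComputablePred.computable_iff_re_compl_re']
  refine ⟨(REPred.exists_of_primrecRel (McKinsey.primrecRel_isDerivation R)).of_eq fun w =>
      (McKinsey.mk_mem_normalClosure_iff w).symm,
    (REPred.exists_of_primrecRel (McKinsey.primrecRel_isSeparatingTable R)).of_eq fun w =>
      ⟨fun ⟨_, hc⟩ => McKinsey.mk_notMem_of_isSeparatingTable hc, fun hw => ?_⟩⟩
  obtain ⟨K, _, _, ψ, hψ⟩ := hres _ ((QuotientGroup.eq_one_iff _).not.2 hw)
  obtain ⟨m, χ, hχ⟩ := exists_monoidHom_perm_fin_ne_one ψ hψ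
  refine McKinsey.exists_isSeparatingTable (χ.comp (QuotientGroup.mk' _)) (fun r hr => ?_) hχ
  rw [MonoidHom.comp_apply, QuotientGroup.mk'_apply,
    (QuotientGroup.eq_one_iff r).2 (Subgroup.subset_normalClosure hr), map_one]
end
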